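/- Let G, H be closed subspaces of a Hilbert space with G + H closed, F an element with ‖F‖ = 1, and c = c(G,H) = c₀(G ∩ (G∩H)^⊥, H ∩ (G∩H)^⊥) the cosine of the Friedrichs angle. Then the iterates Fⁿ of the iterative model combination algorithm satisfy ‖Fⁿ − P_{G⊕H}(F)‖ ≤ c^{2n−1} for all n ≥ 1. -/

import Mathlib

noncomputable def proj {E : Type*} [NormedAddCommGroup E] [InnerProductSpace ℝ E]
    (K : Submodule ℝ E) [CompleteSpace K] : E →L[ℝ] E :=
  K.subtypeL.comp K.orthogonalProjection


noncomputable def cos0 {E : Type*} [NormedAddCommGroup E] [InnerProductSpace ℝ E]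
    (A B : Submodule ℝ E) : ℝ :=
  sSup {r : ℝ | ∃ g ∈ A, ∃ h ∈ B, ‖g‖ ≤ 1 ∧ ‖h‖ ≤ 1 ∧ r = |(inner ℝ g h : ℝ)|}

/-!
Write `w = P_{G ⊕ H} F`, `Q_K = P_{Kᗮ}` and `N = G ∩ H`. Since `P_G F = P_G w` and
`P_H F = P_H w`, the residual `w - Fⁿ` is `(Q_G Q_H)^{n+1} w`, and it lies in `Gᗮ ∩ (G ⊕ H)`.
Each `a ∈ Gᗮ ∩ (G ⊕ H)` is `Q_G h` for some `h ∈ H ∩ Nᗮ`; then `g = P_G h ∈ G ∩ Nᗮ`, so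
`‖g‖² = ⟪g, h⟫ ≤ c ‖g‖ ‖h‖`, and Pythagoras turns `‖g‖ ≤ c ‖h‖` into `‖Q_H a‖ ≤ c ‖a‖`.
With the roles of `G` and `H` exchanged, every projection after the first contracts by `c`,
whence `‖w - Fⁿ‖ ≤ c^{2n+1} ≤ c^{2n-1}`.
-/

open RealInnerProductSpace Submodule

theorem IsComplete.inter {α : Type*} [UniformSpace α] [T2Space α] {s t : Set α}
    (hs : IsComplete s) (ht : IsComplete t) : IsComplete (s ∩ t) := by
  intro f hf hfst
  obtain ⟨x, hxs, hfx⟩ := hs f hf (hfst.trans (Filter.principal_mono.2 Set.inter_subset_left))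
  obtain ⟨y, hyt, hfy⟩ := ht f hf (hfst.trans (Filter.principal_mono.2 Set.inter_subset_right))
  have := hf.1
  exact ⟨x, ⟨hxs, tendsto_nhds_unique hfy hfx ▸ hyt⟩, hfx⟩

section

variable {E : Type*} [NormedAddCommGroup E] [InnerProductSpace ℝ E]

instance Submodule.completeSpace_inf (G H : Submodule ℝ E) [CompleteSpace G] [CompleteSpace H] :
    CompleteSpace ↥(G ⊓ H) :=
  ((completeSpace_coe_iff_isComplete.1 ‹_›).inter
    (completeSpace_coe_iff_isComplete.1 ‹_›)).completeSpace_coe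

lemma proj_eq_starProjection (K : Submodule ℝ E) [CompleteSpace K] :
    proj K = K.starProjection := rfl

lemma abs_inner_le_one_of_norm_le_one {g h : E} (hg : ‖g‖ ≤ 1) (hh : ‖h‖ ≤ 1) :
    |⟪g, h⟫| ≤ 1 :=
  (abs_real_inner_le_norm g h).trans (mul_le_one₀ hg (norm_nonneg h) hh)

lemma cos0_bddAbove (A B : Submodule ℝ E) :
    BddAbove {r : ℝ | ∃ g ∈ A, ∃ h ∈ B, ‖g‖ ≤ 1 ∧ ‖h‖ ≤ 1 ∧ r = |⟪g, h⟫|} := by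
  refine ⟨1, ?_⟩
  rintro _ ⟨g, -, h, -, hg, hh, rfl⟩
  exact abs_inner_le_one_of_norm_le_one hg hh

lemma zero_mem_cos0_set (A B : Submodule ℝ E) :
    (0 : ℝ) ∈ {r : ℝ | ∃ g ∈ A, ∃ h ∈ B, ‖g‖ ≤ 1 ∧ ‖h‖ ≤ 1 ∧ r = |⟪g, h⟫|} :=
  ⟨0, A.zero_mem, 0, B.zero_mem, by simp, by simp, by simp⟩

lemma cos0_nonneg (A B : Submodule ℝ E) : 0 ≤ cos0 A B :=
  le_csSup (cos0_bddAbove A B) (zero_mem_cos0_set A B)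

lemma cos0_le_one (A B : Submodule ℝ E) : cos0 A B ≤ 1 := by
  refine csSup_le ⟨0, zero_mem_cos0_set A B⟩ ?_
  rintro _ ⟨g, -, h, -, hg, hh, rfl⟩
  exact abs_inner_le_one_of_norm_le_one hg hh

lemma cos0_comm (A B : Submodule ℝ E) : cos0 A B = cos0 B A := by
  unfold cos0
  congr 1
  ext r
  constructor <;>
  · rintro ⟨g, hg, h, hh, hg1, hh1, rfl⟩
    exact ⟨h, hh, g, hg, hh1, hg1, by rw [real_inner_comm]⟩

lemma abs_inner_le_cos0_mul {A B : Submodule ℝ E} {g h : E} (hg : g ∈ A) (hh : h ∈ B) :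
    |⟪g, h⟫| ≤ cos0 A B * ‖g‖ * ‖h‖ := by
  rcases eq_or_ne g 0 with rfl | hg0
  · simp
  rcases eq_or_ne h 0 with rfl | hh0
  · simp
  have hgn : 0 < ‖g‖ := norm_pos_iff.2 hg0
  have hhn : 0 < ‖h‖ := norm_pos_iff.2 hh0
  have hunit : |⟪‖g‖⁻¹ • g, ‖h‖⁻¹ • h⟫| ≤ cos0 A B :=
    le_csSup (cos0_bddAbove A B) ⟨_, A.smul_mem _ hg, _, B.smul_mem _ hh,
      (norm_smul_inv_norm hg0).le, (norm_smul_inv_norm hh0).le, rfl⟩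
  rw [real_inner_smul_left, real_inner_smul_right, abs_mul, abs_mul, abs_inv, abs_inv,
    abs_norm, abs_norm, inv_mul_le_iff₀ hgn, inv_mul_le_iff₀ hhn] at hunit
  linarith

noncomputable def friedrichsCos (G H : Submodule ℝ E) : ℝ :=
  cos0 (G ⊓ (G ⊓ H)ᗮ) (H ⊓ (G ⊓ H)ᗮ)

lemma friedrichsCos_comm (G H : Submodule ℝ E) : friedrichsCos G H = friedrichsCos H G := by
  rw [friedrichsCos, friedrichsCos, inf_comm G H, cos0_comm]

lemma norm_starProjection_orthogonal_le_mul_norm_sub (K : Submodule ℝ E)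
    [K.HasOrthogonalProjection] {g h : E} {c : ℝ} (hc : 0 ≤ c) (hh : h ∈ K)
    (hgh : ⟪g, h - g⟫ = 0) (hgc : ‖g‖ ≤ c * ‖h‖) :
    ‖Kᗮ.starProjection g‖ ≤ c * ‖h - g‖ := by
  have hg : ‖g‖ ^ 2 = ‖K.starProjection g‖ ^ 2 + ‖Kᗮ.starProjection g‖ ^ 2 :=
    norm_sq_eq_add_norm_sq_starProjection g K
  have hh' : ‖h‖ ^ 2 = ‖g‖ ^ 2 + ‖h - g‖ ^ 2 := by
    have := norm_add_sq_eq_norm_sq_add_norm_sq_real hgh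
    rw [add_sub_cancel] at this
    nlinarith
  rw [inner_sub_right, sub_eq_zero] at hgh
  have hgq : ‖g‖ ^ 2 ≤ ‖K.starProjection g‖ * ‖h‖ :=
    calc ‖g‖ ^ 2 = ⟪K.starProjection g, h⟫ := by
          rw [K.inner_starProjection_left_eq_right, K.starProjection_eq_self_iff.2 hh,
            ← real_inner_self_eq_norm_sq, hgh]
      _ ≤ ‖K.starProjection g‖ * ‖h‖ := real_inner_le_norm _ _
  refine le_of_sq_le_sq ?_ (by positivity)
  rcases (norm_nonneg h).eq_or_lt with hh0 | hhpos
  · rw [← hh0] at hgc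
    nlinarith [norm_nonneg g]
  · refine le_of_mul_le_mul_right ?_ (pow_pos hhpos 2)
    -- `‖P_{Kᗮ} g‖² ‖h‖² = (‖g‖² - ‖P_K g‖²) ‖h‖² ≤ ‖g‖² ‖h‖² - ‖g‖⁴ = ‖g‖² ‖h - g‖²`
    calc ‖Kᗮ.starProjection g‖ ^ 2 * ‖h‖ ^ 2 ≤ ‖g‖ ^ 2 * ‖h - g‖ ^ 2 := by
          nlinarith [norm_nonneg (K.starProjection g)]
      _ ≤ (c * ‖h‖) ^ 2 * ‖h - g‖ ^ 2 := by gcongr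
      _ = (c * ‖h - g‖) ^ 2 * ‖h‖ ^ 2 := by ring

lemma exists_mem_inf_orthogonal_eq_starProjection (G H : Submodule ℝ E) [CompleteSpace G]
    [CompleteSpace H] {a : E} (haG : a ∈ Gᗮ) (haM : a ∈ G ⊔ H) :
    ∃ h ∈ H ⊓ (G ⊓ H)ᗮ, a = Gᗮ.starProjection h := by
  obtain ⟨g, hg, h, hh, rfl⟩ := mem_sup.1 haM
  refine ⟨(G ⊓ H)ᗮ.starProjection h, ⟨?_, starProjection_apply_mem _ _⟩, ?_⟩
  · rw [starProjection_orthogonal_val]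
    exact sub_mem hh (inf_le_right (b := H) (starProjection_apply_mem _ _))
  · calc g + h = Gᗮ.starProjection (g + h) := (starProjection_eq_self_iff.2 haG).symm
      _ = Gᗮ.starProjection h := by
        rw [map_add, starProjection_orthogonal_apply_eq_zero hg, zero_add]
      _ = Gᗮ.starProjection ((G ⊓ H)ᗮ.starProjection h) := by
        rw [starProjection_orthogonal_val (K := G ⊓ H), map_sub, sub_eq_self.2
          (starProjection_orthogonal_apply_eq_zero
            ((inf_le_left : G ⊓ H ≤ G) (starProjection_apply_mem _ h)))]

lemma norm_starProjection_orthogonal_le_friedrichsCos_mul (G H : Submodule ℝ E)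
    [CompleteSpace G] [CompleteSpace H] {a : E} (ha : a ∈ Gᗮ ⊓ (G ⊔ H)) :
    ‖Hᗮ.starProjection a‖ ≤ friedrichsCos G H * ‖a‖ := by
  obtain ⟨h, ⟨hhH, hhN⟩, rfl⟩ := exists_mem_inf_orthogonal_eq_starProjection G H ha.1 ha.2
  set g := G.starProjection h
  have hgG : g ∈ G := starProjection_apply_mem G h
  have hgN : g ∈ (G ⊓ H)ᗮ := by
    rw [← sub_sub_cancel h g, ← starProjection_orthogonal_val]
    exact sub_mem hhN (orthogonal_le inf_le_left (starProjection_apply_mem _ _))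
  have hhg : h - g = Gᗮ.starProjection h := (starProjection_orthogonal_val h).symm
  have hgh : ⟪g, h - g⟫ = 0 := by
    rw [hhg]; exact inner_right_of_mem_orthogonal hgG (starProjection_apply_mem _ _)
  have hgc : ‖g‖ ≤ friedrichsCos G H * ‖h‖ := by
    have hbound := abs_inner_le_cos0_mul (mem_inf.2 ⟨hgG, hgN⟩) (mem_inf.2 ⟨hhH, hhN⟩)
    have hgg : ⟪g, h⟫ = ‖g‖ ^ 2 := by
      rw [inner_sub_right, sub_eq_zero] at hgh
      rw [hgh, real_inner_self_eq_norm_sq]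
    rw [hgg, abs_of_nonneg (sq_nonneg _), sq] at hbound
    rcases (norm_nonneg g).eq_or_lt with hg0 | hgpos
    · rw [← hg0]; exact mul_nonneg (cos0_nonneg _ _) (norm_nonneg h)
    · exact le_of_mul_le_mul_left (by rw [friedrichsCos]; linarith) hgpos
  rw [← hhg, map_sub, starProjection_orthogonal_apply_eq_zero hhH, zero_sub, norm_neg]
  exact norm_starProjection_orthogonal_le_mul_norm_sub H (cos0_nonneg _ _) hhH hgh hgc

lemma starProjection_orthogonal_mem_inf_of_le {K M : Submodule ℝ E} [K.HasOrthogonalProjection]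
    (hKM : K ≤ M) {a : E} (ha : a ∈ M) : Kᗮ.starProjection a ∈ Kᗮ ⊓ M :=
  ⟨starProjection_apply_mem _ _, by
    rw [starProjection_orthogonal_val]; exact sub_mem ha (hKM (starProjection_apply_mem _ _))⟩

lemma norm_starProjection_orthogonal_comp_le (G H : Submodule ℝ E) [CompleteSpace G]
    [CompleteSpace H] {a : E} (ha : a ∈ G ⊔ H) :
    Gᗮ.starProjection (Hᗮ.starProjection a) ∈ Gᗮ ⊓ (G ⊔ H) ∧
      ‖Gᗮ.starProjection (Hᗮ.starProjection a)‖ ≤ friedrichsCos G H * ‖Hᗮ.starProjection a‖ := by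
  have hb : Hᗮ.starProjection a ∈ Hᗮ ⊓ (G ⊔ H) :=
    starProjection_orthogonal_mem_inf_of_le le_sup_right ha
  refine ⟨starProjection_orthogonal_mem_inf_of_le le_sup_left hb.2, ?_⟩
  rw [friedrichsCos_comm]
  exact norm_starProjection_orthogonal_le_friedrichsCos_mul H G (by rwa [sup_comm])

lemma norm_alternating_residual_le (G H : Submodule ℝ E) [CompleteSpace G] [CompleteSpace H]
    {w : E} (hw : w ∈ G ⊔ H) (r : ℕ → E)
    (hr0 : r 0 = Gᗮ.starProjection (Hᗮ.starProjection w))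
    (hr : ∀ n, r (n + 1) = Gᗮ.starProjection (Hᗮ.starProjection (r n))) (n : ℕ) :
    r n ∈ Gᗮ ⊓ (G ⊔ H) ∧ ‖r n‖ ≤ friedrichsCos G H ^ (2 * n + 1) * ‖w‖ := by
  have hc : 0 ≤ friedrichsCos G H := cos0_nonneg _ _
  induction n with
  | zero =>
    obtain ⟨hmem, hnorm⟩ := norm_starProjection_orthogonal_comp_le G H hw
    refine ⟨hr0 ▸ hmem, hr0 ▸ hnorm.trans ?_⟩
    rw [mul_zero, zero_add, pow_one]
    exact mul_le_mul_of_nonneg_left (norm_starProjection_apply_le _ w) hc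
  | succ n ih =>
    obtain ⟨hmem, hnorm⟩ := norm_starProjection_orthogonal_comp_le G H ih.1.2
    have hH : ‖Hᗮ.starProjection (r n)‖ ≤ friedrichsCos G H * ‖r n‖ :=
      norm_starProjection_orthogonal_le_friedrichsCos_mul G H ih.1
    refine ⟨hr n ▸ hmem, hr n ▸ ?_⟩
    calc _ ≤ friedrichsCos G H * (friedrichsCos G H * ‖r n‖) :=
          hnorm.trans (mul_le_mul_of_nonneg_left hH hc)
      _ ≤ friedrichsCos G H * (friedrichsCos G H *
            (friedrichsCos G H ^ (2 * n + 1) * ‖w‖)) := by gcongr; exact ih.2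
      _ = friedrichsCos G H ^ (2 * (n + 1) + 1) * ‖w‖ := by ring

lemma alternating_projection_residual {G H M : Submodule ℝ E} [G.HasOrthogonalProjection]
    [H.HasOrthogonalProjection] [M.HasOrthogonalProjection] (hGM : G ≤ M) (hHM : H ≤ M)
    (F : E) {xG xH yG yH : E} (hxG : xG ∈ G) (hxH : xH ∈ H)
    (hyH : yH = H.starProjection (F - xG)) (hyG : yG = G.starProjection (F - yH)) :
    M.starProjection F - (yG + yH) =
      Gᗮ.starProjection (Hᗮ.starProjection (M.starProjection F - (xG + xH))) := by
  have hGF : G.starProjection F = G.starProjection (M.starProjection F) :=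
    (congrFun (congrArg DFunLike.coe (starProjection_comp_starProjection_of_le hGM)) F).symm
  have hHF : H.starProjection F = H.starProjection (M.starProjection F) :=
    (congrFun (congrArg DFunLike.coe (starProjection_comp_starProjection_of_le hHM)) F).symm
  simp only [starProjection_orthogonal_val, hyG, hyH, map_sub, map_add, hGF, hHF,
    starProjection_eq_self_iff.2 hxG, starProjection_eq_self_iff.2 hxH]
  abel

end

theorem stmt7_general {E : Type*} [NormedAddCommGroup E] [InnerProductSpace ℝ E]
    (G H : Submodule ℝ E) [CompleteSpace G] [CompleteSpace H] [CompleteSpace ↥(G ⊔ H)]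
    (F : E) (hF : ‖F‖ = 1) (FG FH : ℕ → E)
    (hFH0 : FH 0 = proj H F)
    (hFG : ∀ n : ℕ, FG n = proj G (F - FH n))
    (hFH : ∀ n : ℕ, FH (n + 1) = proj H (F - FG n))
    (c : ℝ) (hc : c = cos0 (G ⊓ (G ⊓ H)ᗮ) (H ⊓ (G ⊓ H)ᗮ)) :
    ∀ n : ℕ, 1 ≤ n → ‖(FG n + FH n) - proj (G ⊔ H) F‖ ≤ c ^ (2 * n - 1) := by
  intro n hn
  simp only [proj_eq_starProjection] at hFH0 hFG hFH ⊢
  set w := (G ⊔ H).starProjection F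
  have hFGmem : ∀ k, FG k ∈ G := fun k => hFG k ▸ starProjection_apply_mem _ _
  have hFHmem : ∀ k, FH k ∈ H := by
    rintro (_ | k)
    · exact hFH0 ▸ starProjection_apply_mem _ _
    · exact hFH k ▸ starProjection_apply_mem _ _
  -- `(FG 0, FH 0)` is one step of the algorithm started from the pair `(0, 0)`
  have hres0 : w - (FG 0 + FH 0) = Gᗮ.starProjection (Hᗮ.starProjection w) := by
    simpa using alternating_projection_residual le_sup_left le_sup_right F G.zero_mem H.zero_mem
      (by rw [sub_zero]; exact hFH0) (hFG 0)
  have hres := norm_alternating_residual_le G H (starProjection_apply_mem _ F)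
    (fun k => w - (FG k + FH k)) hres0
    (fun k => alternating_projection_residual le_sup_left le_sup_right F (hFGmem k) (hFHmem k)
      (hFH k) (hFG (k + 1))) n
  have hw : ‖w‖ ≤ 1 := hF ▸ norm_starProjection_apply_le _ F
  have hc0 : 0 ≤ c := hc ▸ cos0_nonneg _ _
  have hc1 : c ≤ 1 := hc ▸ cos0_le_one _ _
  calc ‖FG n + FH n - w‖ = ‖w - (FG n + FH n)‖ := norm_sub_rev _ _
    _ ≤ c ^ (2 * n + 1) * ‖w‖ := hc ▸ hres.2
    _ ≤ c ^ (2 * n + 1) := mul_le_of_le_one_right (pow_nonneg hc0 _) hw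
    _ ≤ c ^ (2 * n - 1) := pow_le_pow_of_le_one hc0 hc1 (by omega)

theorem stmt7 {E : Type*} [NormedAddCommGroup E] [InnerProductSpace ℝ E] [CompleteSpace E]
    (G H : Submodule ℝ E) [CompleteSpace G] [CompleteSpace H] [CompleteSpace ↥(G ⊔ H)]
    (F : E) (hF : ‖F‖ = 1) (FG FH : ℕ → E)
    (hFH0 : FH 0 = proj H F)
    (hFG : ∀ n : ℕ, FG n = proj G (F - FH n))
    (hFH : ∀ n : ℕ, FH (n + 1) = proj H (F - FG n))
    (c : ℝ) (hc : c = cos0 (G ⊓ (G ⊓ H)ᗮ) (H ⊓ (G ⊓ H)ᗮ)) :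
    ∀ n : ℕ, 1 ≤ n → ‖(FG n + FH n) - proj (G ⊔ H) F‖ ≤ c ^ (2 * n - 1) :=
  stmt7_general G H F hF FG FH hFH0 hFG hFH c hc
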